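/- arXiv:1703.06629 — 7 statements merged into one kernel-verified Lean document; each statement's English description precedes it below -/
import Mathlib

section
/- Let Q be symmetric positive semidefinite with block decomposition Q = U + D + U^*, where D (the block-diagonal part) is symmetric positive definite and U is the strictly upper block-triangular part. Define T = U D^{-1} U^*. Then Q + T is symmetric positive definite. -/
/-!
For `x ≠ 0` write `y = Uᵀ x`, so that `xᵀ (Q + U D⁻¹ Uᵀ) x = xᵀ Q x + yᵀ D⁻¹ y` is a sum of two
nonnegative terms. If `y ≠ 0` the second term is positive because `D⁻¹` is positive definite;
if `y = 0` then also `xᵀ U x = yᵀ x = 0`, so `xᵀ Q x = xᵀ D x > 0`.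
-/

open Matrix

section

variable {n R : Type*} [Fintype n] [CommSemiring R]

lemma dotProduct_mul_mul_transpose_mulVec (U M : Matrix n n R) (x : n → R) :
    x ⬝ᵥ (U * M * Uᵀ) *ᵥ x = (Uᵀ *ᵥ x) ⬝ᵥ M *ᵥ (Uᵀ *ᵥ x) := by
  rw [← mulVec_mulVec, ← mulVec_mulVec, dotProduct_mulVec, ← mulVec_transpose]

lemma dotProduct_mulVec_eq_of_transpose_mulVec_eq_zero {Q D U : Matrix n n R}
    (hdecomp : Q = U + D + Uᵀ) {x : n → R} (hx : Uᵀ *ᵥ x = 0) :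
    x ⬝ᵥ Q *ᵥ x = x ⬝ᵥ D *ᵥ x := by
  have hU : x ⬝ᵥ U *ᵥ x = 0 := by
    rw [dotProduct_mulVec, ← mulVec_transpose, hx, zero_dotProduct]
  simp only [hdecomp, add_mulVec, dotProduct_add, hU, hx, zero_add, add_zero]

end

theorem stmt2_general {N : ℕ} (Q D U : Matrix (Fin N) (Fin N) ℝ)
    (hQ : Q.PosSemidef) (hD : D.PosDef)
    (hdecomp : Q = U + D + Uᵀ) :
    (Q + U * D⁻¹ * Uᵀ).PosDef := by
  have hT : (U * D⁻¹ * Uᵀ).PosSemidef := by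
    simpa using hD.inv.posSemidef.mul_mul_conjTranspose_same U
  refine PosDef.of_dotProduct_mulVec_pos (hQ.1.add hT.1) fun x hx => ?_
  simp only [star_trivial, add_mulVec, dotProduct_add]
  have hQx : 0 ≤ x ⬝ᵥ Q *ᵥ x := by simpa using hQ.dotProduct_mulVec_nonneg x
  have hTx : 0 ≤ x ⬝ᵥ (U * D⁻¹ * Uᵀ) *ᵥ x := by simpa using hT.dotProduct_mulVec_nonneg x
  by_cases hy : Uᵀ *ᵥ x = 0
  · have hDx : 0 < x ⬝ᵥ D *ᵥ x := by simpa using hD.dotProduct_mulVec_pos hx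
    rw [dotProduct_mulVec_eq_of_transpose_mulVec_eq_zero hdecomp hy]
    linarith
  · have hTx_pos : 0 < x ⬝ᵥ (U * D⁻¹ * Uᵀ) *ᵥ x := by
      simpa [dotProduct_mul_mul_transpose_mulVec] using hD.inv.dotProduct_mulVec_pos hy
    linarith

theorem stmt2 {N s : ℕ} (β : Fin N → Fin s) (Q D U : Matrix (Fin N) (Fin N) ℝ)
    (hQ : Q.PosSemidef) (hD : D.PosDef)
    (hDblock : ∀ i j, β i ≠ β j → D i j = 0)
    (hUupper : ∀ i j, ¬ β i < β j → U i j = 0)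
    (hdecomp : Q = U + D + Uᵀ) :
    (Q + U * D⁻¹ * Uᵀ).PosDef :=
  stmt2_general Q D U hQ hD hdecomp
end

section
/- Let D be symmetric positive definite, U strictly upper block-triangular, Ĥ = (D+U)D^{-1}(D+U^*), and for vectors δ', δ define Δ(δ',δ) = δ + U D^{-1}(δ - δ'). Then ‖Ĥ^{-1/2} Δ(δ',δ)‖ ≤ ‖D^{-1/2}(δ - δ')‖ + ‖Ĥ^{-1/2} δ'‖. -/
open Matrix

/-- The Euclidean norm of a vector in `ℝ^N`. -/
noncomputable def enorm {N : ℕ} (v : Fin N → ℝ) : ℝ := Real.sqrt (v ⬝ᵥ v)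

/-- The positive semidefinite square root of a positive semidefinite matrix
(the definition `Matrix.PosSemidef.sqrt` of Mathlib of December 2024, since removed). -/
noncomputable def Matrix.PosSemidef.sqrt {n : Type*} [Fintype n] [DecidableEq n]
    {A : Matrix n n ℝ} (hA : A.PosSemidef) : Matrix n n ℝ :=
  hA.1.eigenvectorUnitary.1 * diagonal ((↑) ∘ (Real.sqrt ·) ∘ hA.1.eigenvalues) *
    (star hA.1.eigenvectorUnitary : Matrix n n ℝ)

lemma Matrix.PosSemidef.sqrt_mul_self {n : Type*} [Fintype n] [DecidableEq n]
    {A : Matrix n n ℝ} (hA : A.PosSemidef) : hA.sqrt * hA.sqrt = A := by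
  conv_rhs => rw [hA.1.spectral_theorem, Unitary.conjStarAlgAut_apply]
  unfold Matrix.PosSemidef.sqrt
  calc _ = (hA.1.eigenvectorUnitary : Matrix n n ℝ) *
        (diagonal ((↑) ∘ (Real.sqrt ·) ∘ hA.1.eigenvalues) *
          ((star hA.1.eigenvectorUnitary : Matrix n n ℝ) * (hA.1.eigenvectorUnitary : Matrix n n ℝ)) *
          diagonal ((↑) ∘ (Real.sqrt ·) ∘ hA.1.eigenvalues)) *
        (star hA.1.eigenvectorUnitary : Matrix n n ℝ) := by simp only [Matrix.mul_assoc]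
    _ = _ := by
      rw [Unitary.coe_star_mul_self, Matrix.mul_one, diagonal_mul_diagonal]
      congr 3
      funext i
      simp [Real.mul_self_sqrt (hA.eigenvalues_nonneg i)]

lemma posSemidef_sqrt_isHermitian {n : Type*} [Fintype n] [DecidableEq n]
    {A : Matrix n n ℝ} (hA : A.PosSemidef) : hA.sqrt.IsHermitian := by
  unfold Matrix.PosSemidef.sqrt Matrix.IsHermitian
  simp [Matrix.conjTranspose_mul, Matrix.mul_assoc, Unitary.coe_star, Matrix.star_eq_conjTranspose]

lemma enorm_eq_norm {N : ℕ} (v : Fin N → ℝ) :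
    _root_.enorm v = ‖(WithLp.equiv 2 (Fin N → ℝ)).symm v‖ := by
  rw [_root_.enorm, EuclideanSpace.norm_eq]
  congr 1
  simp [dotProduct, Real.norm_eq_abs, sq_abs, sq]

lemma enorm_add_le' {N : ℕ} (u v : Fin N → ℝ) :
    _root_.enorm (u + v) ≤ _root_.enorm u + _root_.enorm v := by
  simp only [enorm_eq_norm]
  rw [show (WithLp.equiv 2 (Fin N → ℝ)).symm (u + v)
      = (WithLp.equiv 2 (Fin N → ℝ)).symm u + (WithLp.equiv 2 (Fin N → ℝ)).symm v from rfl]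
  exact norm_add_le _ _

lemma enorm_mulVec {N : ℕ} (M : Matrix (Fin N) (Fin N) ℝ) (x : Fin N → ℝ) :
    _root_.enorm (M *ᵥ x) = Real.sqrt (x ⬝ᵥ ((Mᵀ * M) *ᵥ x)) := by
  have h1 : (M *ᵥ x) ᵥ* M = (Mᵀ * M) *ᵥ x := by
    rw [← mulVec_mulVec, mulVec_transpose]
  rw [_root_.enorm, dotProduct_mulVec, h1, dotProduct_comm]

theorem stmt5 {N s : ℕ} (β : Fin N → Fin s) (D U : Matrix (Fin N) (Fin N) ℝ)
    (hD : D.PosDef)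
    (hDblock : ∀ i j, β i ≠ β j → D i j = 0)
    (hUupper : ∀ i j, ¬ β i < β j → U i j = 0)
    (hH : ((D + U) * D⁻¹ * (D + Uᵀ)).PosDef)
    (δ δ' : Fin N → ℝ) :
    _root_.enorm ((hH.posSemidef.sqrt)⁻¹ *ᵥ (δ + U *ᵥ (D⁻¹ *ᵥ (δ - δ'))))
      ≤ _root_.enorm ((hD.posSemidef.sqrt)⁻¹ *ᵥ (δ - δ'))
        + _root_.enorm ((hH.posSemidef.sqrt)⁻¹ *ᵥ δ') := by
  classical
  set H : Matrix (Fin N) (Fin N) ℝ := (D + U) * D⁻¹ * (D + Uᵀ) with hHdef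
  set S : Matrix (Fin N) (Fin N) ℝ := (hH.posSemidef.sqrt)⁻¹ with hSdef
  set T : Matrix (Fin N) (Fin N) ℝ := (hD.posSemidef.sqrt)⁻¹ with hTdef
  set x : Fin N → ℝ := δ - δ' with hxdef
  -- symmetry of D
  have hDT : Dᵀ = D := by
    have := hD.isHermitian
    rwa [Matrix.IsHermitian, Matrix.conjTranspose_eq_transpose_of_trivial] at this
  have hDdet : IsUnit D.det := isUnit_iff_ne_zero.mpr (ne_of_gt hD.det_pos)
  -- determinant of D + U is a unit
  have hDUT : (D + U)ᵀ = D + Uᵀ := by rw [transpose_add, hDT]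
  have hDUdet : IsUnit (D + U).det := by
    have hHdetpos := hH.det_pos
    rw [hHdef, Matrix.det_mul, Matrix.det_mul, ← hDUT, Matrix.det_transpose] at hHdetpos
    refine isUnit_iff_ne_zero.mpr fun h => ?_
    rw [h] at hHdetpos; simp at hHdetpos
  have hDUTdet : IsUnit (D + Uᵀ).det := by
    rwa [← hDUT, Matrix.det_transpose]
  -- inverse of H
  have hHinv : H⁻¹ = (D + Uᵀ)⁻¹ * (D * (D + U)⁻¹) := by
    rw [hHdef, Matrix.mul_inv_rev, Matrix.mul_inv_rev, nonsing_inv_nonsing_inv D hDdet]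
  -- the matrix A = (D + U) * D⁻¹
  set A : Matrix (Fin N) (Fin N) ℝ := (D + U) * D⁻¹ with hAdef
  have hAT : Aᵀ = D⁻¹ * (D + Uᵀ) := by
    rw [hAdef, transpose_mul, hDUT, transpose_nonsing_inv, hDT]
  have hkey : Aᵀ * H⁻¹ * A = D⁻¹ := by
    rw [hAT, hHinv, hAdef]
    calc D⁻¹ * (D + Uᵀ) * ((D + Uᵀ)⁻¹ * (D * (D + U)⁻¹)) * ((D + U) * D⁻¹)
        = D⁻¹ * ((D + Uᵀ) * (D + Uᵀ)⁻¹) * D * (((D + U)⁻¹ * (D + U)) * D⁻¹) := by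
          simp only [Matrix.mul_assoc]
      _ = D⁻¹ * (D * D⁻¹) := by
          rw [mul_nonsing_inv _ hDUTdet, nonsing_inv_mul _ hDUdet, Matrix.mul_one,
            Matrix.one_mul, Matrix.mul_assoc]
      _ = D⁻¹ := by rw [mul_nonsing_inv _ hDdet, Matrix.mul_one]
  -- symmetry of S and T, and S * S = H⁻¹, T * T = D⁻¹
  have hsqSym : ∀ {M : Matrix (Fin N) (Fin N) ℝ} (hM : M.PosSemidef), hM.sqrt⁻¹ᵀ = hM.sqrt⁻¹ := by
    intro M hM
    have := (posSemidef_sqrt_isHermitian hM).inv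
    rwa [Matrix.IsHermitian, Matrix.conjTranspose_eq_transpose_of_trivial] at this
  have hSS : Sᵀ * S = H⁻¹ := by
    rw [hSdef, hsqSym, ← Matrix.mul_inv_rev, hH.posSemidef.sqrt_mul_self]
  have hTT : Tᵀ * T = D⁻¹ := by
    rw [hTdef, hsqSym, ← Matrix.mul_inv_rev, hD.posSemidef.sqrt_mul_self]
  -- rewrite the argument
  have harg : δ + U *ᵥ (D⁻¹ *ᵥ x) = A *ᵥ x + δ' := by
    have : A *ᵥ x = x + U *ᵥ (D⁻¹ *ᵥ x) := by
      rw [hAdef, ← mulVec_mulVec, Matrix.add_mulVec, mulVec_mulVec,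
        mul_nonsing_inv _ hDdet, Matrix.one_mulVec]
    rw [this, hxdef]
    abel
  rw [harg, Matrix.mulVec_add]
  refine le_trans (enorm_add_le' _ _) (add_le_add_left (le_of_eq ?_) _)
  rw [mulVec_mulVec, enorm_mulVec, enorm_mulVec]
  congr 2
  rw [transpose_mul, Matrix.mul_assoc, ← Matrix.mul_assoc Sᵀ, hSS, ← Matrix.mul_assoc,
    Matrix.mul_assoc Aᵀ, ← Matrix.mul_assoc Aᵀ, hkey, hTT]
end

section
/- With Q symmetric positive semidefinite partitioned into s blocks, D its block-diagonal part (positive definite), U its strictly upper block-triangular part, and V_j the elimination matrices as in the SCB procedure, it holds that Q + U D^{-1} U^* = V_s ⋯ V_2 · D · V_2^* ⋯ V_s^*. -/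
open Matrix

/-- The part of `U` supported on block column `j` (blocks given by `β`). -/
def Ucol {N s : ℕ} (β : Fin N → Fin s) (U : Matrix (Fin N) (Fin N) ℝ) (j : Fin s) :
    Matrix (Fin N) (Fin N) ℝ :=
  Matrix.of fun i k => if β k = j then U i k else 0

/-- The elimination matrix `V_j = I + U_j D⁻¹`, whose block column `j` above the
diagonal consists of the blocks `Q_{i,j} Q_{j,j}⁻¹`. -/
noncomputable def Vmat {N s : ℕ} (β : Fin N → Fin s) (U D : Matrix (Fin N) (Fin N) ℝ)
    (j : Fin s) : Matrix (Fin N) (Fin N) ℝ :=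
  1 + Ucol β U j * D⁻¹

/-- Inverse of a block-diagonal matrix is block diagonal. -/
lemma inv_block {N s : ℕ} (β : Fin N → Fin s) (D : Matrix (Fin N) (Fin N) ℝ)
    (hdet : IsUnit D.det) (hDblock : ∀ i j, β i ≠ β j → D i j = 0) :
    ∀ i j, β i ≠ β j → D⁻¹ i j = 0 := by
  intro i j hij
  set P : Matrix (Fin N) (Fin N) ℝ :=
    Matrix.diagonal (fun k => if β k = β i then (1 : ℝ) else 0) with hP
  have hcomm : D * P = P * D := by
    ext a b
    rw [Matrix.mul_diagonal, Matrix.diagonal_mul]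
    by_cases h1 : β b = β i <;> by_cases h2 : β a = β i <;> simp [h1, h2]
    all_goals first
      | exact hDblock a b (fun h => h2 (h.trans h1))
      | exact (hDblock a b (fun h => h2 (h.trans h1))).symm
      | exact hDblock a b (fun h => h1 (h.symm.trans h2))
      | exact (hDblock a b (fun h => h1 (h.symm.trans h2))).symm
  have h2 : D⁻¹ * P = P * D⁻¹ := by
    calc D⁻¹ * P = D⁻¹ * P * (D * D⁻¹) := by rw [Matrix.mul_nonsing_inv D hdet, mul_one]
    _ = D⁻¹ * (P * D) * D⁻¹ := by simp only [mul_assoc]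
    _ = D⁻¹ * (D * P) * D⁻¹ := by rw [hcomm]
    _ = (D⁻¹ * D) * (P * D⁻¹) := by simp only [mul_assoc]
    _ = P * D⁻¹ := by rw [Matrix.nonsing_inv_mul D hdet, one_mul]
  have e0 : D⁻¹ i j = (P * D⁻¹) i j := by
    rw [hP, Matrix.diagonal_mul]; simp
  rw [e0, ← h2, Matrix.mul_diagonal]
  simp [Ne.symm hij]

lemma cross_zero {N s : ℕ} (β : Fin N → Fin s) (U D : Matrix (Fin N) (Fin N) ℝ)
    (hDinv : ∀ i j, β i ≠ β j → D⁻¹ i j = 0)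
    (hUupper : ∀ i j, ¬ β i < β j → U i j = 0)
    {j k : Fin s} (h : ¬ j < k) :
    Ucol β U j * D⁻¹ * Ucol β U k = 0 := by
  ext i m
  rw [Matrix.mul_apply]
  simp only [Matrix.zero_apply]
  apply Finset.sum_eq_zero
  intro b _
  rw [Matrix.mul_apply]
  by_cases hbm : β m = k
  · by_cases hb : β b < β m
    · have hz : ∀ a, (Ucol β U j) i a * D⁻¹ a b = 0 := by
        intro a
        by_cases ha : β a = j
        · have : D⁻¹ a b = 0 := by
            apply hDinv
            intro hab
            apply h
            calc j = β b := (hab ▸ ha).symm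
            _ < k := hbm ▸ hb
          simp [this]
        · simp [Ucol, ha]
      rw [Finset.sum_eq_zero (fun a _ => hz a), zero_mul]
    · have : (Ucol β U k) b m = 0 := by simp [Ucol, hbm, hUupper b m hb]
      rw [this, mul_zero]
  · have : (Ucol β U k) b m = 0 := by simp [Ucol, hbm]
    rw [this, mul_zero]

lemma sum_cross {N s : ℕ} (β : Fin N → Fin s) (U D : Matrix (Fin N) (Fin N) ℝ)
    (hDinv : ∀ i j, β i ≠ β j → D⁻¹ i j = 0)
    (hUupper : ∀ i j, ¬ β i < β j → U i j = 0) (a : Fin s) :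
    ∀ t : List (Fin s), (∀ k ∈ t, k < a) →
      Ucol β U a * D⁻¹ * (t.map (Ucol β U)).sum = 0 := by
  intro t
  induction t with
  | nil => simp
  | cons b t' ih =>
    intro h
    simp only [List.map_cons, List.sum_cons, mul_add]
    rw [cross_zero β U D hDinv hUupper (not_lt.mpr (le_of_lt (h b (by simp)))),
      ih (fun c hc => h c (by simp [hc])), add_zero]

lemma prod_Vmat {N s : ℕ} (β : Fin N → Fin s) (U D : Matrix (Fin N) (Fin N) ℝ)
    (hDinv : ∀ i j, β i ≠ β j → D⁻¹ i j = 0)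
    (hUupper : ∀ i j, ¬ β i < β j → U i j = 0) :
    ∀ l : List (Fin s), l.Pairwise (fun a b => b < a) →
      (l.map (Vmat β U D)).prod = 1 + ((l.map (Ucol β U)).sum) * D⁻¹ := by
  intro l
  induction l with
  | nil => simp
  | cons a t ih =>
    intro hp
    rw [List.pairwise_cons] at hp
    obtain ⟨ha, ht⟩ := hp
    have hS := sum_cross β U D hDinv hUupper a t ha
    simp only [List.map_cons, List.prod_cons, List.sum_cons, ih ht, Vmat]
    have hz : Ucol β U a * D⁻¹ * ((t.map (Ucol β U)).sum * D⁻¹) = 0 := by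
      rw [← mul_assoc, hS, zero_mul]
    rw [mul_add, mul_one, add_mul, one_mul, hz, add_zero, add_mul]
    exact (add_assoc _ _ _)

theorem stmt10 {N s : ℕ} (hs : 2 ≤ s) (β : Fin N → Fin s)
    (Q D U : Matrix (Fin N) (Fin N) ℝ)
    (hQ : Q.PosSemidef) (hD : D.PosDef)
    (hDblock : ∀ i j, β i ≠ β j → D i j = 0)
    (hUupper : ∀ i j, ¬ β i < β j → U i j = 0)
    (hdecomp : Q = U + D + Uᵀ) :
    Q + U * D⁻¹ * Uᵀ =
      (((List.finRange s).reverse.dropLast).map (Vmat β U D)).prod * D *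
        ((((List.finRange s).reverse.dropLast).map (Vmat β U D)).prod)ᵀ := by
  have hs0 : 0 < s := lt_of_lt_of_le (by norm_num) hs
  have hdet : IsUnit D.det := isUnit_iff_ne_zero.mpr (ne_of_gt hD.det_pos)
  have hDinv := inv_block β D hdet hDblock
  set l := ((List.finRange s).reverse.dropLast) with hl
  have hpair : l.Pairwise (fun a b => b < a) := by
    apply List.Pairwise.sublist (List.dropLast_sublist _)
    rw [List.pairwise_reverse]
    exact List.pairwise_lt_finRange s
  have hU0 : Ucol β U ⟨0, hs0⟩ = 0 := by
    ext i k
    by_cases h : β k = ⟨0, hs0⟩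
    · simp [Ucol, h, hUupper i k (by rw [h]; exact fun hc => Nat.not_lt_zero _ hc)]
    · simp [Ucol, h]
  have hsum : (l.map (Ucol β U)).sum = U := by
    have hne0 : (List.finRange s) ≠ [] := by simp [List.finRange_eq_nil_iff]; omega
    have hne : ((List.finRange s).reverse : List (Fin s)) ≠ [] := by
      simpa using hne0
    have hlast : (List.finRange s).reverse.getLast hne = ⟨0, hs0⟩ := by
      rw [List.getLast_reverse, List.head_eq_getElem]
      simp [List.getElem_finRange]
    have hsplit : l ++ [(⟨0, hs0⟩ : Fin s)] = (List.finRange s).reverse := by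
      rw [hl, ← hlast]
      exact List.dropLast_append_getLast hne
    have h2 : (((List.finRange s).reverse).map (Ucol β U)).sum = U := by
      rw [List.map_reverse, List.sum_reverse, ← Fin.sum_univ_def]
      ext i k
      rw [Matrix.sum_apply]
      simp only [Ucol, Matrix.of_apply]
      rw [Finset.sum_ite_eq (Finset.univ) (β k) (fun _ => U i k)]
      simp
    calc (l.map (Ucol β U)).sum
        = ((l ++ [(⟨0, hs0⟩ : Fin s)]).map (Ucol β U)).sum := by simp [hU0]
      _ = U := by rw [hsplit, h2]
  have hprod : (l.map (Vmat β U D)).prod = 1 + U * D⁻¹ :=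
    (prod_Vmat β U D hDinv hUupper l hpair).trans (by rw [hsum])
  rw [hprod]
  have hDsym : Dᵀ = D := by
    have := hD.isHermitian.eq
    simpa using this
  have hT : (1 + U * D⁻¹)ᵀ = 1 + D⁻¹ * Uᵀ := by
    rw [Matrix.transpose_add, Matrix.transpose_one, Matrix.transpose_mul,
      Matrix.transpose_nonsing_inv, hDsym]
  rw [hT]
  have e1 : (1 + U * D⁻¹) * D = D + U := by
    rw [add_mul, one_mul, mul_assoc, Matrix.nonsing_inv_mul D hdet, mul_one]
  rw [e1, add_mul, mul_add, mul_add, mul_one, mul_one,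
    ← mul_assoc, Matrix.mul_nonsing_inv D hdet, one_mul, hdecomp]
  noncomm_ring
end

section
/- For s = 2 blocks with Q = [[Q11, Q12],[Q12^*, Q22]], Q11, Q22 symmetric positive definite, and x̄ = (x̄1, x̄2) given: if x2' = Q22^{-1}(b2 − Q12^* x̄1), x1^+ = argmin_{x1} { p(x1) + q(x1, x2') } and x2^+ = Q22^{-1}(b2 − Q12^* x1^+), then (x1^+, x2^+) is the unique minimizer of p(x1) + q(x) + (1/2)‖x − x̄‖²_T, where q(x) = (1/2)⟨x, Qx⟩ − ⟨b, x⟩ and T = Q12 Q22^{-1} Q12^*. -/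
/-!
Completing the square in `x2`: with `s x1 := Q22⁻¹ (b2 - Q12ᵀ x1)`, the minimiser of `q x1 ·`,
`q x1 x2 = q x1 (s x1) + ½ ‖x2 - s x1‖²_{Q22}`. As `x2' = s x̄1` and
`s x̄1 - s x1 = Q22⁻¹ Q12ᵀ (x1 - x̄1)`, the square at `x2'` is exactly `½ ‖x1 - x̄1‖²_T`, so the
objective splits as `(p + q(·, x2')) x1 + ½ ‖x2 - s x1‖²_{Q22}`. The first summand is strictly
convex (`Q11 ≻ 0`) with minimiser `x1⁺`; the second is nonnegative and vanishes iff `x2 = s x1`.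
-/

open Matrix

theorem dotProduct_mulVec_nonsing_inv_mulVec {m n R : Type*} [Fintype m] [Fintype n]
    [DecidableEq n] [CommRing R] {A : Matrix n n R} (hA : IsUnit A.det)
    (B : Matrix m n R) (v : m → R) :
    (A⁻¹ *ᵥ (Bᵀ *ᵥ v)) ⬝ᵥ A *ᵥ (A⁻¹ *ᵥ (Bᵀ *ᵥ v)) = v ⬝ᵥ (B * A⁻¹ * Bᵀ) *ᵥ v := by
  rw [mulVec_mulVec _ A, mul_nonsing_inv A hA, one_mulVec, dotProduct_transpose_mulVec,
    mulVec_mulVec, mulVec_mulVec, Matrix.mul_assoc]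

namespace Matrix.PosDef

variable {n : Type*} [Fintype n] {A : Matrix n n ℝ}

theorem dotProduct_mulVec_self_eq_zero_iff (hA : A.PosDef) {x : n → ℝ} :
    x ⬝ᵥ A *ᵥ x = 0 ↔ x = 0 := by
  refine ⟨fun h => by_contra fun hx => ?_, fun h => by simp [h]⟩
  simpa [h] using hA.dotProduct_mulVec_pos hx

theorem strictConvexOn_quadratic (hA : A.PosDef) (c : n → ℝ) (d : ℝ) :
    StrictConvexOn ℝ Set.univ fun x => (1/2) * (x ⬝ᵥ A *ᵥ x) + c ⬝ᵥ x + d := by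
  refine ⟨convex_univ, fun x _ y _ hxy a b ha hb hab => ?_⟩
  have hpos : 0 < (x - y) ⬝ᵥ A *ᵥ (x - y) := by
    simpa using hA.dotProduct_mulVec_pos (sub_ne_zero.mpr hxy)
  obtain rfl : b = 1 - a := by linarith
  simp only [mulVec_add, mulVec_smul, mulVec_sub, dotProduct_add, add_dotProduct,
    dotProduct_sub, sub_dotProduct, dotProduct_smul, smul_dotProduct, smul_eq_mul] at hpos ⊢
  nlinarith [mul_pos ha hb]

end Matrix.PosDef

section BlockQuad

variable {m n : Type*} [Fintype m] [Fintype n]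

noncomputable def blockQuad (Q11 : Matrix m m ℝ) (Q12 : Matrix m n ℝ) (Q22 : Matrix n n ℝ)
    (b1 : m → ℝ) (b2 : n → ℝ) (x1 : m → ℝ) (x2 : n → ℝ) : ℝ :=
  (1/2) * (x1 ⬝ᵥ (Q11 *ᵥ x1 + Q12 *ᵥ x2) + x2 ⬝ᵥ (Q12ᵀ *ᵥ x1 + Q22 *ᵥ x2))
    - b1 ⬝ᵥ x1 - b2 ⬝ᵥ x2

variable {Q11 : Matrix m m ℝ} {Q12 : Matrix m n ℝ} {Q22 : Matrix n n ℝ} {b1 : m → ℝ}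
  {b2 : n → ℝ}

theorem blockQuad_eq (x1 : m → ℝ) (x2 : n → ℝ) :
    blockQuad Q11 Q12 Q22 b1 b2 x1 x2 = (1/2) * (x1 ⬝ᵥ Q11 *ᵥ x1) + x1 ⬝ᵥ Q12 *ᵥ x2
      + (1/2) * (x2 ⬝ᵥ Q22 *ᵥ x2) - b1 ⬝ᵥ x1 - b2 ⬝ᵥ x2 := by
  rw [blockQuad, dotProduct_add, dotProduct_add, dotProduct_transpose_mulVec]
  ring

theorem strictConvexOn_blockQuad_left (hQ11 : Q11.PosDef) (x2 : n → ℝ) :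
    StrictConvexOn ℝ Set.univ (blockQuad Q11 Q12 Q22 b1 b2 · x2) := by
  convert hQ11.strictConvexOn_quadratic (Q12 *ᵥ x2 - b1)
    ((1/2) * (x2 ⬝ᵥ Q22 *ᵥ x2) - b2 ⬝ᵥ x2) using 2 with x1
  rw [blockQuad_eq, sub_dotProduct, dotProduct_comm (Q12 *ᵥ x2)]
  ring

theorem blockQuad_eq_add_of_mulVec_eq (hQ22 : Q22.IsSymm) {x1 : m → ℝ} {w : n → ℝ}
    (hw : Q22 *ᵥ w = b2 - Q12ᵀ *ᵥ x1) (x2 : n → ℝ) :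
    blockQuad Q11 Q12 Q22 b1 b2 x1 x2
      = blockQuad Q11 Q12 Q22 b1 b2 x1 w + (1/2) * ((x2 - w) ⬝ᵥ Q22 *ᵥ (x2 - w)) := by
  have hcross : ∀ v, x1 ⬝ᵥ Q12 *ᵥ v = v ⬝ᵥ (b2 - Q22 *ᵥ w) := fun v => by
    rw [hw, sub_sub_cancel, dotProduct_transpose_mulVec]
  have hsymm : w ⬝ᵥ Q22 *ᵥ x2 = x2 ⬝ᵥ Q22 *ᵥ w := by
    rw [← dotProduct_transpose_mulVec, hQ22.eq]
  rw [blockQuad_eq, blockQuad_eq, hcross, hcross]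
  simp only [mulVec_sub, dotProduct_sub, sub_dotProduct]
  rw [hsymm, dotProduct_comm w b2, dotProduct_comm x2 b2]
  ring

theorem blockQuad_add_schur_eq [DecidableEq n] (hQ22 : Q22.IsSymm) (hdet : IsUnit Q22.det)
    (xbar1 x1 : m → ℝ) (x2 : n → ℝ) :
    blockQuad Q11 Q12 Q22 b1 b2 x1 x2
        + (1/2) * ((x1 - xbar1) ⬝ᵥ (Q12 * Q22⁻¹ * Q12ᵀ) *ᵥ (x1 - xbar1))
      = blockQuad Q11 Q12 Q22 b1 b2 x1 (Q22⁻¹ *ᵥ (b2 - Q12ᵀ *ᵥ xbar1))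
        + (1/2) * ((x2 - Q22⁻¹ *ᵥ (b2 - Q12ᵀ *ᵥ x1)) ⬝ᵥ
            Q22 *ᵥ (x2 - Q22⁻¹ *ᵥ (b2 - Q12ᵀ *ᵥ x1))) := by
  have hsolve : Q22 *ᵥ (Q22⁻¹ *ᵥ (b2 - Q12ᵀ *ᵥ x1)) = b2 - Q12ᵀ *ᵥ x1 := by
    rw [mulVec_mulVec, mul_nonsing_inv _ hdet, one_mulVec]
  have hdiff : Q22⁻¹ *ᵥ (b2 - Q12ᵀ *ᵥ xbar1) - Q22⁻¹ *ᵥ (b2 - Q12ᵀ *ᵥ x1)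
      = Q22⁻¹ *ᵥ (Q12ᵀ *ᵥ (x1 - xbar1)) := by
    simp only [mulVec_sub]
    abel
  rw [blockQuad_eq_add_of_mulVec_eq hQ22 hsolve x2,
    blockQuad_eq_add_of_mulVec_eq hQ22 hsolve (Q22⁻¹ *ᵥ (b2 - Q12ᵀ *ᵥ xbar1)), hdiff,
    dotProduct_mulVec_nonsing_inv_mulVec hdet]
  ring

end BlockQuad

theorem isMin_prod_of_eq_add {α β : Type*} {F : α × β → ℝ} {f : α → ℝ} {g : α → β → ℝ}
    {s : α → β} {a₀ : α} (hF : ∀ a b, F (a, b) = f a + g a b) (hg : ∀ a b, 0 ≤ g a b)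
    (hgs : ∀ a, g a (s a) = 0) (hg_eq_zero : ∀ a b, g a b = 0 → b = s a)
    (ha₀ : ∀ a, f a₀ ≤ f a) (huniq : ∀ a, (∀ a', f a ≤ f a') → a = a₀) :
    (∀ z, F (a₀, s a₀) ≤ F z) ∧ ∀ z, (∀ w, F z ≤ F w) → z = (a₀, s a₀) := by
  have hFs : ∀ a, F (a, s a) = f a := fun a => by rw [hF, hgs, add_zero]
  refine ⟨fun ⟨a, b⟩ => ?_, fun ⟨a, b⟩ hmin => ?_⟩
  · rw [hFs, hF]
    linarith [ha₀ a, hg a b]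
  · have hab := hmin (a₀, s a₀)
    rw [hFs, hF] at hab
    have hb : b = s a := hg_eq_zero a b (by linarith [ha₀ a, hg a b])
    have ha : a = a₀ := huniq a fun a' => by
      simpa [hFs, hF, hb, hgs] using hmin (a', s a')
    rw [hb, ha]

theorem stmt12_general {n1 n2 : ℕ}
    (Q11 : Matrix (Fin n1) (Fin n1) ℝ) (Q12 : Matrix (Fin n1) (Fin n2) ℝ)
    (Q22 : Matrix (Fin n2) (Fin n2) ℝ)
    (hQ11 : Q11.PosDef) (hQ22 : Q22.PosDef)
    (p : (Fin n1 → ℝ) → ℝ) (hp : ConvexOn ℝ Set.univ p)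
    (b1 : Fin n1 → ℝ) (b2 : Fin n2 → ℝ)
    (xbar1 : Fin n1 → ℝ)
    (q : (Fin n1 → ℝ) → (Fin n2 → ℝ) → ℝ)
    (hq : ∀ x1 x2, q x1 x2 =
      (1/2) * (x1 ⬝ᵥ (Q11 *ᵥ x1 + Q12 *ᵥ x2) + x2 ⬝ᵥ (Q12ᵀ *ᵥ x1 + Q22 *ᵥ x2))
        - b1 ⬝ᵥ x1 - b2 ⬝ᵥ x2)
    (x2' : Fin n2 → ℝ) (hx2' : x2' = Q22⁻¹ *ᵥ (b2 - Q12ᵀ *ᵥ xbar1))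
    (x1p : Fin n1 → ℝ) (hx1p : ∀ y, p x1p + q x1p x2' ≤ p y + q y x2')
    (x2p : Fin n2 → ℝ) (hx2p : x2p = Q22⁻¹ *ᵥ (b2 - Q12ᵀ *ᵥ x1p))
    (G : (Fin n1 → ℝ) × (Fin n2 → ℝ) → ℝ)
    (hG : ∀ z, G z = p z.1 + q z.1 z.2 +
      (1/2) * ((z.1 - xbar1) ⬝ᵥ ((Q12 * Q22⁻¹ * Q12ᵀ) *ᵥ (z.1 - xbar1)))) :
    (∀ z, G (x1p, x2p) ≤ G z) ∧ (∀ z, (∀ w, G z ≤ G w) → z = (x1p, x2p)) := by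
  have hq' : q = blockQuad Q11 Q12 Q22 b1 b2 := funext₂ hq
  have hsymm : Q22.IsSymm := isHermitian_iff_isSymm.mp hQ22.isHermitian
  have hdet : IsUnit Q22.det := (isUnit_iff_isUnit_det _).mp hQ22.isUnit
  have hstrict : StrictConvexOn ℝ Set.univ fun y => p y + q y x2' := by
    rw [hq']
    exact hp.add_strictConvexOn (strictConvexOn_blockQuad_left hQ11 x2')
  subst hx2p
  refine isMin_prod_of_eq_add (s := fun x1 => Q22⁻¹ *ᵥ (b2 - Q12ᵀ *ᵥ x1))
    (g := fun x1 x2 => (1/2) * ((x2 - Q22⁻¹ *ᵥ (b2 - Q12ᵀ *ᵥ x1)) ⬝ᵥ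
      Q22 *ᵥ (x2 - Q22⁻¹ *ᵥ (b2 - Q12ᵀ *ᵥ x1))))
    (fun x1 x2 => ?_) (fun x1 x2 => ?_) (fun x1 => by simp) (fun x1 x2 h => ?_) hx1p
    (fun y hy => hstrict.eq_of_isMinOn (isMinOn_univ_iff.mpr hy) (isMinOn_univ_iff.mpr hx1p)
      trivial trivial)
  · rw [hG, add_assoc, hq', hx2', blockQuad_add_schur_eq hsymm hdet, ← add_assoc]
  · simpa using hQ22.posSemidef.dotProduct_mulVec_nonneg (x2 - Q22⁻¹ *ᵥ (b2 - Q12ᵀ *ᵥ x1))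
  · exact sub_eq_zero.mp <| hQ22.dotProduct_mulVec_self_eq_zero_iff.mp <|
      (mul_eq_zero.mp h).resolve_left (by norm_num)

theorem stmt12 {n1 n2 : ℕ}
    (Q11 : Matrix (Fin n1) (Fin n1) ℝ) (Q12 : Matrix (Fin n1) (Fin n2) ℝ)
    (Q22 : Matrix (Fin n2) (Fin n2) ℝ)
    (hQ : (Matrix.fromBlocks Q11 Q12 Q12ᵀ Q22).PosSemidef)
    (hQ11 : Q11.PosDef) (hQ22 : Q22.PosDef)
    (p : (Fin n1 → ℝ) → ℝ) (hp : ConvexOn ℝ Set.univ p)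
    (hpc : LowerSemicontinuous p)
    (b1 : Fin n1 → ℝ) (b2 : Fin n2 → ℝ)
    (xbar1 : Fin n1 → ℝ) (xbar2 : Fin n2 → ℝ)
    (q : (Fin n1 → ℝ) → (Fin n2 → ℝ) → ℝ)
    (hq : ∀ x1 x2, q x1 x2 =
      (1/2) * (x1 ⬝ᵥ (Q11 *ᵥ x1 + Q12 *ᵥ x2) + x2 ⬝ᵥ (Q12ᵀ *ᵥ x1 + Q22 *ᵥ x2))
        - b1 ⬝ᵥ x1 - b2 ⬝ᵥ x2)
    (x2' : Fin n2 → ℝ) (hx2' : x2' = Q22⁻¹ *ᵥ (b2 - Q12ᵀ *ᵥ xbar1))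
    (x1p : Fin n1 → ℝ) (hx1p : ∀ y, p x1p + q x1p x2' ≤ p y + q y x2')
    (x2p : Fin n2 → ℝ) (hx2p : x2p = Q22⁻¹ *ᵥ (b2 - Q12ᵀ *ᵥ x1p))
    (G : (Fin n1 → ℝ) × (Fin n2 → ℝ) → ℝ)
    (hG : ∀ z, G z = p z.1 + q z.1 z.2 +
      (1/2) * ((z.1 - xbar1) ⬝ᵥ ((Q12 * Q22⁻¹ * Q12ᵀ) *ᵥ (z.1 - xbar1)))) :
    (∀ z, G (x1p, x2p) ≤ G z) ∧ (∀ z, (∀ w, G z ≤ G w) → z = (x1p, x2p)) :=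
  stmt12_general Q11 Q12 Q22 hQ11 hQ22 p hp b1 b2 xbar1 q hq x2' hx2' x1p hx1p x2p hx2p G hG
end

section
/- Block sGS decomposition theorem (exact case, p ≡ 0): Let Q = U + D + U^* be symmetric positive semidefinite with D block-diagonal positive definite and U strictly upper block-triangular, T = U D^{-1} U^*, and b, x̄ given. Define x' by the backward sweep x'_i = Q_{ii}^{-1}(b_i − Σ_{j<i} Q_{ji}^* x̄_j − Σ_{j>i} Q_{ij} x'_j) for i = s,…,1, and then x^+ by the forward sweep x^+_1 = x'_1 and x^+_i = Q_{ii}^{-1}(b_i − Σ_{j<i} Q_{ji}^* x^+_j − Σ_{j>i} Q_{ij} x'_j) for i = 2,…,s. Then (Q + T) x^+ = b + T x̄, i.e., x^+ is the unique minimizer of (1/2)⟨x, Qx⟩ − ⟨b, x⟩ + (1/2)‖x − x̄‖²_T. -/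
/-!
Since `U + D + L + U D⁻¹ L = (1 + U D⁻¹)(D + L)` for any `L`, applying `1 + U D⁻¹` to the
forward sweep and eliminating `L x̄` with the backward sweep gives `(Q + T) x⁺ = b + T x̄`.
The objective is the quadratic `½ ⟨x, (Q + T) x⟩ - ⟨b + T x̄, x⟩` up to a constant, so it suffices
that `Q + T` is positive definite: if `⟨z, (Q + T) z⟩ = 0` then `⟨Uᵀz, D⁻¹ Uᵀz⟩ = 0`, so `Uᵀz = 0`,
and then `0 = ⟨z, Q z⟩ = ⟨z, D z⟩` forces `z = 0`.
-/

open Matrix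

namespace Matrix

variable {n : Type*} [Fintype n]

section SymmetricGaussSeidel

variable [DecidableEq n] {R : Type*} [CommRing R] {D U L : Matrix n n R}

theorem add_add_add_mul_nonsing_inv_mul (hD : IsUnit D.det) :
    U + D + L + U * D⁻¹ * L = (1 + U * D⁻¹) * (D + L) := by
  rw [Matrix.add_mul, Matrix.one_mul, Matrix.mul_add, nonsing_inv_mul_cancel_right _ _ hD]
  abel

theorem mulVec_eq_of_symmGaussSeidel_sweeps (hD : IsUnit D.det) {b xbar x' xplus : n → R}
    (hback : (D + U) *ᵥ x' = b - L *ᵥ xbar) (hforward : (D + L) *ᵥ xplus = b - U *ᵥ x') :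
    (U + D + L + U * D⁻¹ * L) *ᵥ xplus = b + (U * D⁻¹ * L) *ᵥ xbar := by
  have hL : L *ᵥ xbar = b - (D + U) *ᵥ x' := by rw [hback, sub_sub_cancel]
  rw [add_add_add_mul_nonsing_inv_mul hD, ← mulVec_mulVec, hforward, ← mulVec_mulVec, hL]
  simp only [mulVec_sub, add_mulVec, mulVec_add, one_mulVec, mulVec_mulVec, Matrix.add_mul,
    Matrix.one_mul, nonsing_inv_mul_cancel_right _ _ hD]
  abel

end SymmetricGaussSeidel

theorem IsSymm.sub_dotProduct_mulVec_sub {R : Type*} [CommRing R] {T : Matrix n n R}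
    (hT : T.IsSymm) (x y : n → R) :
    (x - y) ⬝ᵥ (T *ᵥ (x - y)) = x ⬝ᵥ (T *ᵥ x) - 2 * ((T *ᵥ y) ⬝ᵥ x) + y ⬝ᵥ (T *ᵥ y) := by
  have hswap : y ⬝ᵥ (T *ᵥ x) = (T *ᵥ y) ⬝ᵥ x := by
    rw [dotProduct_mulVec, ← mulVec_transpose, hT.eq, dotProduct_comm]
  simp only [mulVec_sub, dotProduct_sub, sub_dotProduct, hswap, dotProduct_comm x (T *ᵥ y)]
  ring

section Real

variable {Q D U M : Matrix n n ℝ}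

theorem PosDef.posSemidef_mul_inv_mul_transpose [DecidableEq n] (hD : D.PosDef) (U : Matrix n n ℝ) :
    (U * D⁻¹ * Uᵀ).PosSemidef := by
  simpa only [conjTranspose_eq_transpose_of_trivial] using
    hD.inv.posSemidef.mul_mul_conjTranspose_same U

theorem posDef_add_mul_inv_mul_transpose [DecidableEq n] (hQ : Q.PosSemidef) (hD : D.PosDef)
    (hQ_eq : Q = U + D + Uᵀ) : (Q + U * D⁻¹ * Uᵀ).PosDef := by
  have hT := hD.posSemidef_mul_inv_mul_transpose U
  refine PosDef.of_dotProduct_mulVec_pos (hQ.isHermitian.add hT.isHermitian) fun z hz => ?_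
  simp only [star_trivial, add_mulVec, dotProduct_add]
  have hQz : 0 ≤ z ⬝ᵥ (Q *ᵥ z) := by simpa using hQ.dotProduct_mulVec_nonneg z
  have hTz : z ⬝ᵥ ((U * D⁻¹ * Uᵀ) *ᵥ z) = (Uᵀ *ᵥ z) ⬝ᵥ (D⁻¹ *ᵥ (Uᵀ *ᵥ z)) := by
    rw [← mulVec_mulVec, ← mulVec_mulVec, dotProduct_mulVec, ← mulVec_transpose]
  by_cases hUz : Uᵀ *ᵥ z = 0
  · have hQD : z ⬝ᵥ (Q *ᵥ z) = z ⬝ᵥ (D *ᵥ z) := by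
      rw [hQ_eq, add_mulVec, add_mulVec, dotProduct_add, dotProduct_add, dotProduct_mulVec z U,
        ← mulVec_transpose, hUz]
      simp
    have hDz : 0 < z ⬝ᵥ (D *ᵥ z) := by simpa using hD.dotProduct_mulVec_pos hz
    have hTz0 : 0 ≤ z ⬝ᵥ ((U * D⁻¹ * Uᵀ) *ᵥ z) := by simpa using hT.dotProduct_mulVec_nonneg z
    linarith
  · have hTpos : 0 < z ⬝ᵥ ((U * D⁻¹ * Uᵀ) *ᵥ z) := by
      simpa [hTz] using hD.inv.dotProduct_mulVec_pos hUz
    linarith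

theorem IsSymm.sub_quadratic_eq {c x₀ : n → ℝ} (hM : M.IsSymm) (hx₀ : M *ᵥ x₀ = c) (x : n → ℝ) :
    (1/2 * (x ⬝ᵥ (M *ᵥ x)) - c ⬝ᵥ x) - (1/2 * (x₀ ⬝ᵥ (M *ᵥ x₀)) - c ⬝ᵥ x₀)
      = 1/2 * ((x - x₀) ⬝ᵥ (M *ᵥ (x - x₀))) := by
  rw [hM.sub_dotProduct_mulVec_sub, hx₀, dotProduct_comm c x₀, ← hx₀]
  ring

theorem PosDef.isMinimizer_unique_of_mulVec_eq {c x₀ : n → ℝ} (hM : M.PosDef)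
    (hx₀ : M *ᵥ x₀ = c) {f : (n → ℝ) → ℝ} {C : ℝ}
    (hf : ∀ x, f x = 1/2 * (x ⬝ᵥ (M *ᵥ x)) - c ⬝ᵥ x + C) :
    (∀ x, f x₀ ≤ f x) ∧ ∀ x, (∀ y, f x ≤ f y) → x = x₀ := by
  have hgap : ∀ x, f x - f x₀ = 1/2 * ((x - x₀) ⬝ᵥ (M *ᵥ (x - x₀))) := fun x => by
    rw [hf, hf, ← (isHermitian_iff_isSymm.mp hM.isHermitian).sub_quadratic_eq hx₀]
    ring
  have hnonneg : ∀ x, 0 ≤ (x - x₀) ⬝ᵥ (M *ᵥ (x - x₀)) := fun x => by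
    simpa using hM.posSemidef.dotProduct_mulVec_nonneg (x - x₀)
  refine ⟨fun x => by linarith [hgap x, hnonneg x], fun x hx => ?_⟩
  by_contra hne
  have hpos : 0 < (x - x₀) ⬝ᵥ (M *ᵥ (x - x₀)) := by
    simpa using hM.dotProduct_mulVec_pos (sub_ne_zero.mpr hne)
  linarith [hgap x, hx x₀]

end Real

end Matrix

theorem stmt13_general {N : ℕ} (Q D U : Matrix (Fin N) (Fin N) ℝ)
    (hQ : Q.PosSemidef) (hD : D.PosDef)
    (hdecomp : Q = U + D + Uᵀ)
    (b xbar x' xplus : Fin N → ℝ)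
    (hback : (D + U) *ᵥ x' = b - Uᵀ *ᵥ xbar)
    (hforward : (D + Uᵀ) *ᵥ xplus = b - U *ᵥ x')
    (f : (Fin N → ℝ) → ℝ)
    (hf : ∀ x, f x = (1/2) * (x ⬝ᵥ (Q *ᵥ x)) - b ⬝ᵥ x
      + (1/2) * ((x - xbar) ⬝ᵥ ((U * D⁻¹ * Uᵀ) *ᵥ (x - xbar)))) :
    (Q + U * D⁻¹ * Uᵀ) *ᵥ xplus = b + (U * D⁻¹ * Uᵀ) *ᵥ xbar ∧
    (∀ x, f xplus ≤ f x) ∧ (∀ x, (∀ y, f x ≤ f y) → x = xplus) := by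
  set T := U * D⁻¹ * Uᵀ
  have hsolve : (Q + T) *ᵥ xplus = b + T *ᵥ xbar := by
    rw [hdecomp]
    exact mulVec_eq_of_symmGaussSeidel_sweeps ((isUnit_iff_isUnit_det D).mp hD.isUnit)
      hback hforward
  have hT : T.IsSymm :=
    isHermitian_iff_isSymm.mp (hD.posSemidef_mul_inv_mul_transpose U).isHermitian
  refine ⟨hsolve, (posDef_add_mul_inv_mul_transpose hQ hD hdecomp).isMinimizer_unique_of_mulVec_eq
    hsolve (C := 1/2 * (xbar ⬝ᵥ (T *ᵥ xbar))) fun x => ?_⟩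
  rw [hf, hT.sub_dotProduct_mulVec_sub]
  simp only [add_mulVec, dotProduct_add, add_dotProduct]
  ring

theorem stmt13 {N s : ℕ} (β : Fin N → Fin s) (Q D U : Matrix (Fin N) (Fin N) ℝ)
    (hQ : Q.PosSemidef) (hD : D.PosDef)
    (hDblock : ∀ i j, β i ≠ β j → D i j = 0)
    (hUupper : ∀ i j, ¬ β i < β j → U i j = 0)
    (hdecomp : Q = U + D + Uᵀ)
    (b xbar x' xplus : Fin N → ℝ)
    (hback : (D + U) *ᵥ x' = b - Uᵀ *ᵥ xbar)
    (hforward : (D + Uᵀ) *ᵥ xplus = b - U *ᵥ x')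
    (f : (Fin N → ℝ) → ℝ)
    (hf : ∀ x, f x = (1/2) * (x ⬝ᵥ (Q *ᵥ x)) - b ⬝ᵥ x
      + (1/2) * ((x - xbar) ⬝ᵥ ((U * D⁻¹ * Uᵀ) *ᵥ (x - xbar)))) :
    (Q + U * D⁻¹ * Uᵀ) *ᵥ xplus = b + (U * D⁻¹ * Uᵀ) *ᵥ xbar ∧
    (∀ x, f xplus ≤ f x) ∧ (∀ x, (∀ y, f x ≤ f y) → x = xplus) :=
  stmt13_general Q D U hQ hD hdecomp b xbar x' xplus hback hforward f hf
end

section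
/- The block sGS iteration x^{k+1} = x^k + Ĥ^{-1}(b − Q x^k), where Ĥ = (D+U)D^{-1}(D+U^*), satisfies: x^{k+1} is the unique minimizer over x of (1/2)⟨x, Qx⟩ − ⟨b, x⟩ + (1/2)‖x − x^k‖²_T, where T = U D^{-1} U^*. -/
/-!
Expanding `Ĥ = (D + U) D⁻¹ (D + Uᵀ)` gives `Ĥ = Q + T`, so up to a constant the objective is
`½ ⟪x, Ĥ x⟫ - ⟪b + T xᵏ, x⟫`, and `xᵏ⁺¹` is exactly its stationary point `Ĥ x = b + T xᵏ`.
Completing the square, `f x = f xᵏ⁺¹ + ½ ‖x - xᵏ⁺¹‖²_Ĥ`. Finally `Ĥ = Bᵀ D⁻¹ B` with `B = D + Uᵀ`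
is positive definite because `B` is injective: `B v = 0` forces
`⟪v, Q v⟫ = -⟪v, D v⟫`, which contradicts `Q ⪰ 0` unless `v = 0`.
-/

open Matrix

namespace Matrix

theorem IsHermitian.isSymm {n R : Type*} [Star R] [TrivialStar R] {A : Matrix n n R}
    (hA : A.IsHermitian) : A.IsSymm := by
  rw [IsSymm, ← conjTranspose_eq_transpose_of_trivial, hA.eq]

variable {n : Type*} [Fintype n]

theorem IsSymm.dotProduct_mulVec_comm {R : Type*} [CommSemiring R] {A : Matrix n n R}
    (hA : A.IsSymm) (x y : n → R) : x ⬝ᵥ A *ᵥ y = y ⬝ᵥ A *ᵥ x := by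
  simpa only [hA.eq] using dotProduct_transpose_mulVec A x y

theorem IsSymm.dotProduct_mulVec_sub_sub {R : Type*} [CommRing R] {A : Matrix n n R}
    (hA : A.IsSymm) (x y : n → R) :
    (x - y) ⬝ᵥ A *ᵥ (x - y) = x ⬝ᵥ A *ᵥ x - 2 * (A *ᵥ y ⬝ᵥ x) + y ⬝ᵥ A *ᵥ y := by
  simp only [mulVec_sub, dotProduct_sub, sub_dotProduct, hA.dotProduct_mulVec_comm y x,
    dotProduct_comm (A *ᵥ y) x]
  ring

theorem IsSymm.quadratic_eq_add_of_mulVec_eq {A : Matrix n n ℝ} (hA : A.IsSymm) {c x₀ : n → ℝ}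
    (hx₀ : A *ᵥ x₀ = c) (x : n → ℝ) :
    (1 / 2) * (x ⬝ᵥ A *ᵥ x) - c ⬝ᵥ x =
      (1 / 2) * (x₀ ⬝ᵥ A *ᵥ x₀) - c ⬝ᵥ x₀ + (1 / 2) * ((x - x₀) ⬝ᵥ A *ᵥ (x - x₀)) := by
  rw [hA.dotProduct_mulVec_sub_sub, hx₀, dotProduct_comm c x₀, ← hx₀]
  ring

theorem PosDef.unique_minimizer_of_eq_add_quadratic {A : Matrix n n ℝ} (hA : A.PosDef)
    {f : (n → ℝ) → ℝ} {x₀ : n → ℝ} (hf : ∀ x, f x = f x₀ + (1 / 2) * ((x - x₀) ⬝ᵥ A *ᵥ (x - x₀))) :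
    (∀ x, f x₀ ≤ f x) ∧ (∀ x, (∀ y, f x ≤ f y) → x = x₀) := by
  have hnonneg : ∀ v, 0 ≤ v ⬝ᵥ A *ᵥ v := by
    simpa only [star_trivial] using hA.posSemidef.dotProduct_mulVec_nonneg
  refine ⟨fun x => by linarith [hf x, hnonneg (x - x₀)], fun x hx => ?_⟩
  by_contra hne
  have hpos := hA.dotProduct_mulVec_pos (sub_ne_zero.mpr hne)
  rw [star_trivial] at hpos
  linarith [hf x, hx x₀]

theorem add_mul_nonsing_inv_mul_add_transpose [DecidableEq n] {R : Type*} [CommRing R]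
    {D U : Matrix n n R} (hD : IsUnit D.det) :
    (D + U) * D⁻¹ * (D + Uᵀ) = (U + D + Uᵀ) + U * D⁻¹ * Uᵀ := by
  rw [add_mul, add_mul, mul_nonsing_inv D hD, one_mul, mul_add, Matrix.mul_assoc U D⁻¹ D,
    nonsing_inv_mul D hD, mul_one]
  abel

theorem mulVec_injective_add_transpose {D U : Matrix n n ℝ} (hD : D.PosDef)
    (hQ : (U + D + Uᵀ).PosSemidef) :
    Function.Injective (D + Uᵀ).mulVec := by
  refine (injective_iff_map_eq_zero (mulVecLin (D + Uᵀ))).mpr fun v hv => ?_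
  have hUv : Uᵀ *ᵥ v = -(D *ᵥ v) := by
    rw [mulVecLin_apply, add_mulVec] at hv
    exact eq_neg_of_add_eq_zero_right hv
  have hQv : v ⬝ᵥ (U + D + Uᵀ) *ᵥ v = -(v ⬝ᵥ D *ᵥ v) := by
    rw [add_mulVec, add_mulVec, dotProduct_add, dotProduct_add, ← dotProduct_transpose_mulVec U,
      hUv, dotProduct_neg]
    ring
  by_contra hv0
  have hDv := hD.dotProduct_mulVec_pos hv0
  have hQv' := hQ.dotProduct_mulVec_nonneg v
  rw [star_trivial] at hDv hQv'
  linarith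

theorem posDef_add_mul_nonsing_inv_mul_add_transpose [DecidableEq n] {D U : Matrix n n ℝ}
    (hD : D.PosDef) (hQ : (U + D + Uᵀ).PosSemidef) : ((D + U) * D⁻¹ * (D + Uᵀ)).PosDef := by
  have := hD.inv.conjTranspose_mul_mul_same (mulVec_injective_add_transpose hD hQ)
  rwa [conjTranspose_add, hD.isHermitian.eq, conjTranspose_eq_transpose_of_trivial Uᵀ,
    transpose_transpose] at this

end Matrix

theorem stmt14_general {N : ℕ} (Q D U : Matrix (Fin N) (Fin N) ℝ)
    (hQ : Q.PosSemidef) (hD : D.PosDef)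
    (hdecomp : Q = U + D + Uᵀ)
    (b xk xnew : Fin N → ℝ)
    (hxnew : xnew = xk + ((D + U) * D⁻¹ * (D + Uᵀ))⁻¹ *ᵥ (b - Q *ᵥ xk))
    (f : (Fin N → ℝ) → ℝ)
    (hf : ∀ x, f x = (1/2) * (x ⬝ᵥ (Q *ᵥ x)) - b ⬝ᵥ x
      + (1/2) * ((x - xk) ⬝ᵥ ((U * D⁻¹ * Uᵀ) *ᵥ (x - xk)))) :
    (∀ x, f xnew ≤ f x) ∧ (∀ x, (∀ y, f x ≤ f y) → x = xnew) := by
  subst hdecomp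
  set H := (D + U) * D⁻¹ * (D + Uᵀ)
  set T := U * D⁻¹ * Uᵀ
  have hHQT : H = (U + D + Uᵀ) + T :=
    add_mul_nonsing_inv_mul_add_transpose ((isUnit_iff_isUnit_det D).mp hD.isUnit)
  have hH : H.PosDef := posDef_add_mul_nonsing_inv_mul_add_transpose hD hQ
  have hT : T.IsSymm := (hD.inv.posSemidef.mul_mul_conjTranspose_same U).isHermitian.isSymm
  have hHxnew : H *ᵥ xnew = b + T *ᵥ xk := by
    rw [hxnew, mulVec_add, mulVec_mulVec,
      mul_nonsing_inv H ((isUnit_iff_isUnit_det H).mp hH.isUnit), one_mulVec, hHQT, add_mulVec]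
    abel
  have hfH : ∀ x, f x = (1 / 2) * (x ⬝ᵥ H *ᵥ x) - (b + T *ᵥ xk) ⬝ᵥ x
      + (1 / 2) * (xk ⬝ᵥ T *ᵥ xk) := fun x => by
    rw [hf, hT.dotProduct_mulVec_sub_sub, hHQT, add_mulVec _ T, dotProduct_add, add_dotProduct]
    ring
  refine hH.unique_minimizer_of_eq_add_quadratic fun x => ?_
  rw [hfH, hfH, hH.isHermitian.isSymm.quadratic_eq_add_of_mulVec_eq hHxnew x]
  ring

theorem stmt14 {N s : ℕ} (β : Fin N → Fin s) (Q D U : Matrix (Fin N) (Fin N) ℝ)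
    (hQ : Q.PosSemidef) (hD : D.PosDef)
    (hDblock : ∀ i j, β i ≠ β j → D i j = 0)
    (hUupper : ∀ i j, ¬ β i < β j → U i j = 0)
    (hdecomp : Q = U + D + Uᵀ)
    (b xk xnew : Fin N → ℝ)
    (hxnew : xnew = xk + ((D + U) * D⁻¹ * (D + Uᵀ))⁻¹ *ᵥ (b - Q *ᵥ xk))
    (f : (Fin N → ℝ) → ℝ)
    (hf : ∀ x, f x = (1/2) * (x ⬝ᵥ (Q *ᵥ x)) - b ⬝ᵥ x
      + (1/2) * ((x - xk) ⬝ᵥ ((U * D⁻¹ * Uᵀ) *ᵥ (x - xk)))) :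
    (∀ x, f xnew ≤ f x) ∧ (∀ x, (∀ y, f x ≤ f y) → x = xnew) :=
  stmt14_general Q D U hQ hD hdecomp b xk xnew hxnew f hf
end

section
/- Let {u_k}, {λ_k} be sequences of nonnegative reals and {s_k} a nondecreasing sequence of reals with s_0 ≥ u_0². Suppose for every k ≥ 1 that u_k² ≤ s_k + 2 Σ_{i=1}^k λ_i u_i. Then for every k ≥ 1, u_k ≤ λ̄_k + √(s_k + λ̄_k²), where λ̄_k = Σ_{i=1}^k λ_i. -/
/-! Let `m ≤ k` be an index where `u` is maximal on `[1, k]`. Bounding every `u i` in the sum by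
`u m` and `s_m` by `s_k` gives the quadratic inequality `u_m² ≤ s_k + 2 λ̄_k u_m`, whose larger root
is `λ̄_k + √(s_k + λ̄_k²)`; and `u_k ≤ u_m`. -/

open Finset

theorem le_add_sqrt_of_sq_le_add_two_mul {x s L : ℝ} (h : x ^ 2 ≤ s + 2 * L * x) :
    x ≤ L + √(s + L ^ 2) := by
  have hsq : (x - L) ^ 2 ≤ s + L ^ 2 := by nlinarith
  linarith [le_abs_self (x - L), Real.abs_le_sqrt hsq]

theorem sum_mul_le_sum_mul_of_subset {ι : Type*} {s t : Finset ι} {f g : ι → ℝ} {M : ℝ}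
    (hst : s ⊆ t) (hf : ∀ i ∈ t, 0 ≤ f i) (hg : ∀ i ∈ t, 0 ≤ g i) (hgM : ∀ i ∈ t, g i ≤ M) :
    ∑ i ∈ s, f i * g i ≤ (∑ i ∈ t, f i) * M :=
  calc ∑ i ∈ s, f i * g i ≤ ∑ i ∈ t, f i * g i :=
        sum_le_sum_of_subset_of_nonneg hst fun i hi _ => mul_nonneg (hf i hi) (hg i hi)
    _ ≤ ∑ i ∈ t, f i * M := sum_le_sum fun i hi => mul_le_mul_of_nonneg_left (hgM i hi) (hf i hi)
    _ = (∑ i ∈ t, f i) * M := (sum_mul ..).symm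

theorem stmt17_general (u lam sSeq : ℕ → ℝ)
    (hu : ∀ k, 0 ≤ u k) (hlam : ∀ k, 0 ≤ lam k)
    (hs : Monotone sSeq)
    (hrec : ∀ k, 1 ≤ k → (u k) ^ 2 ≤ sSeq k + 2 * ∑ i ∈ Finset.Icc 1 k, lam i * u i) :
    ∀ k, 1 ≤ k →
      u k ≤ (∑ i ∈ Finset.Icc 1 k, lam i) +
        Real.sqrt (sSeq k + (∑ i ∈ Finset.Icc 1 k, lam i) ^ 2) := by
  intro k hk
  have hkmem : k ∈ Icc 1 k := mem_Icc.mpr ⟨hk, le_rfl⟩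
  obtain ⟨m, hm, hmax⟩ := exists_max_image (Icc 1 k) u ⟨k, hkmem⟩
  obtain ⟨hm1, hmk⟩ := mem_Icc.mp hm
  have hquad : u m ^ 2 ≤ sSeq k + 2 * (∑ i ∈ Icc 1 k, lam i) * u m := by
    have hsum := sum_mul_le_sum_mul_of_subset (Icc_subset_Icc le_rfl hmk)
      (fun i _ => hlam i) (fun i _ => hu i) hmax
    linarith [hrec m hm1, hs hmk]
  exact (hmax k hkmem).trans (le_add_sqrt_of_sq_le_add_two_mul hquad)

theorem stmt17 (u lam sSeq : ℕ → ℝ)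
    (hu : ∀ k, 0 ≤ u k) (hlam : ∀ k, 0 ≤ lam k)
    (hs : Monotone sSeq) (hs0 : (u 0) ^ 2 ≤ sSeq 0)
    (hrec : ∀ k, 1 ≤ k → (u k) ^ 2 ≤ sSeq k + 2 * ∑ i ∈ Finset.Icc 1 k, lam i * u i) :
    ∀ k, 1 ≤ k →
      u k ≤ (∑ i ∈ Finset.Icc 1 k, lam i) +
        Real.sqrt (sSeq k + (∑ i ∈ Finset.Icc 1 k, lam i) ^ 2) :=
  stmt17_general u lam sSeq hu hlam hs hrec
end
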